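/- arXiv:1906.00073 — 7 statements merged into one kernel-verified Lean document; each statement's English description precedes it below -/
import Mathlib

section
/- For a path graph P_n with n ≥ 2 vertices and β = 1/2, the β-packing number of P_n equals n - 2. -/
open scoped Classical

/-- `S` satisfies the β-packing property: `S` is a proper subset of the vertex set
and every vertex outside `S` has at most a β-fraction of its neighbors inside `S`. -/
def PackProp {V : Type*} [Fintype V] (G : SimpleGraph V) (β : ℝ) (S : Finset V) : Prop :=
  S ≠ Finset.univ ∧
    ∀ v ∉ S, ((G.neighborFinset v ∩ S).card : ℝ) ≤ β * (G.degree v : ℝ)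

/-- `S` is a β-packing set: it satisfies the β-packing property and is maximal with it. -/
def IsBetaPacking {V : Type*} [Fintype V] (G : SimpleGraph V) (β : ℝ) (S : Finset V) : Prop :=
  PackProp G β S ∧ ∀ T : Finset V, PackProp G β T → S ⊆ T → S = T

/-- The β-packing number: maximum cardinality of a β-packing set. -/
noncomputable def betaPack {V : Type*} [Fintype V] (G : SimpleGraph V) (β : ℝ) : ℕ :=
  sSup {k : ℕ | ∃ S : Finset V, IsBetaPacking G β S ∧ S.card = k}

lemma path_exists_adj (n : ℕ) (hn : 2 ≤ n) (v : Fin n) :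
    ∃ u, (SimpleGraph.pathGraph n).Adj v u := by
  by_cases h : v.val + 1 < n
  · exact ⟨⟨v.val + 1, h⟩, SimpleGraph.pathGraph_adj.2 (Or.inl rfl)⟩
  · exact ⟨⟨v.val - 1, by omega⟩, SimpleGraph.pathGraph_adj.2 (Or.inr (by simp; omega))⟩

lemma card_le_aux (n : ℕ) (hn : 2 ≤ n) (S : Finset (Fin n))
    (hS : PackProp (SimpleGraph.pathGraph n) (1/2 : ℝ) S) : S.card ≤ n - 2 := by
  by_contra hc
  push_neg at hc
  have hlt : S.card < n := by
    have := Finset.card_lt_card (Finset.ssubset_univ_iff.2 hS.1)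
    simpa using this
  have hcard : S.card = n - 1 := by omega
  have hcompl : Sᶜ.card = 1 := by
    rw [Finset.card_compl, hcard]
    simp
    omega
  obtain ⟨v, hv⟩ := Finset.card_eq_one.1 hcompl
  have hvS : v ∉ S := by
    have : v ∈ Sᶜ := hv ▸ Finset.mem_singleton_self v
    simpa using this
  set G := SimpleGraph.pathGraph n with hG
  have h2 := hS.2 v hvS
  have h2' : ((G.neighborFinset v ∩ S).card : ℝ) ≤ (1/2) * (G.degree v : ℝ) := by
    convert h2 using 4 <;> congr!
  have hsub : G.neighborFinset v ⊆ S := by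
    intro u hu
    by_contra huS
    have : u ∈ Sᶜ := Finset.mem_compl.2 huS
    rw [hv, Finset.mem_singleton] at this
    subst this
    rw [SimpleGraph.mem_neighborFinset] at hu
    exact G.irrefl hu
  rw [Finset.inter_eq_left.2 hsub] at h2'
  have hpos : 0 < G.degree v := by
    rw [SimpleGraph.degree_pos_iff_exists_adj]
    exact path_exists_adj n hn v
  have hposR : (0:ℝ) < (G.degree v : ℝ) := by exact_mod_cast hpos
  have : ((G.neighborFinset v).card : ℝ) = (G.degree v : ℝ) := by
    rw [SimpleGraph.card_neighborFinset_eq_degree]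
  rw [this] at h2'
  linarith

theorem stmt_0 (n : ℕ) (hn : 2 ≤ n) :
    betaPack (SimpleGraph.pathGraph n) (1/2 : ℝ) = n - 2 := by
  set G := SimpleGraph.pathGraph n with hG
  set S : Finset (Fin n) := Finset.univ.filter (fun v => 2 ≤ v.val) with hSdef
  have hScard : S.card = n - 2 := by
    have hs : S = (Finset.univ : Finset (Fin n)) \ {⟨0, by omega⟩, ⟨1, by omega⟩} := by
      ext v
      simp [hSdef, Fin.ext_iff]
      omega
    rw [hs, Finset.card_sdiff_of_subset (Finset.subset_univ _), Finset.card_univ, Fintype.card_fin,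
      Finset.card_insert_of_notMem (by simp [Fin.ext_iff]), Finset.card_singleton]
  have hSpack : PackProp G (1/2 : ℝ) S := by
    refine ⟨?_, fun v hv => ?_⟩
    · intro h
      have : (⟨0, by omega⟩ : Fin n) ∈ S := h ▸ Finset.mem_univ _
      simp [hSdef] at this
    · have goal' : ((G.neighborFinset v ∩ S).card : ℝ) ≤ (1/2) * (G.degree v : ℝ) := by
        have hvval : v.val < 2 := by
          by_contra h
          exact hv (Finset.mem_filter.2 ⟨Finset.mem_univ _, by omega⟩)
        interval_cases h : v.val
        · -- v.val = 0 : intersection empty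
          have he : G.neighborFinset v ∩ S = ∅ := by
            ext u
            simp only [Finset.mem_inter, SimpleGraph.mem_neighborFinset, Finset.notMem_empty,
              iff_false, hSdef, Finset.mem_filter, Finset.mem_univ, true_and, not_and]
            intro hadj h2
            rcases SimpleGraph.pathGraph_adj.1 hadj with h1 | h1 <;> omega
          rw [he]
          simp only [Finset.card_empty, Nat.cast_zero]
          positivity
        · -- v.val = 1
          by_cases hne : (G.neighborFinset v ∩ S).Nonempty
          · obtain ⟨u, hu⟩ := hne
            rw [Finset.mem_inter, SimpleGraph.mem_neighborFinset] at hu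
            have huS : 2 ≤ u.val := by
              have := hu.2
              rw [hSdef, Finset.mem_filter] at this
              exact this.2
            have hu2 : u.val = 2 := by
              rcases SimpleGraph.pathGraph_adj.1 hu.1 with h1 | h1 <;> omega
            have hn3 : 3 ≤ n := by omega
            have hcard1 : (G.neighborFinset v ∩ S).card ≤ 1 := by
              apply Finset.card_le_one.2
              intro a ha b hb
              rw [Finset.mem_inter, SimpleGraph.mem_neighborFinset] at ha hb
              have haS : 2 ≤ a.val := by
                have := ha.2; rw [hSdef, Finset.mem_filter] at this; exact this.2
              have hbS : 2 ≤ b.val := by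
                have := hb.2; rw [hSdef, Finset.mem_filter] at this; exact this.2
              have ha2 : a.val = 2 := by
                rcases SimpleGraph.pathGraph_adj.1 ha.1 with h1 | h1 <;> omega
              have hb2 : b.val = 2 := by
                rcases SimpleGraph.pathGraph_adj.1 hb.1 with h1 | h1 <;> omega
              exact Fin.ext (by omega)
            have hdeg2 : 2 ≤ G.degree v := by
              have hsub : ({⟨0, by omega⟩, ⟨2, by omega⟩} : Finset (Fin n)) ⊆
                  G.neighborFinset v := by
                intro a ha
                simp only [Finset.mem_insert, Finset.mem_singleton] at ha
                rcases ha with rfl | rfl <;>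
                  · rw [SimpleGraph.mem_neighborFinset]
                    exact SimpleGraph.pathGraph_adj.2 (by simp; omega)
              have hle := Finset.card_le_card hsub
              rw [Finset.card_insert_of_notMem (by simp [Fin.ext_iff]),
                Finset.card_singleton, SimpleGraph.card_neighborFinset_eq_degree] at hle
              exact hle
            calc ((G.neighborFinset v ∩ S).card : ℝ) ≤ 1 := by exact_mod_cast hcard1
              _ ≤ (1/2) * (G.degree v : ℝ) := by
                  have : (2:ℝ) ≤ (G.degree v : ℝ) := by exact_mod_cast hdeg2
                  linarith
          · rw [Finset.not_nonempty_iff_eq_empty.1 hne]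
            simp only [Finset.card_empty, Nat.cast_zero]
            positivity
      convert goal' using 4 <;> congr!
  have hmax : IsBetaPacking G (1/2 : ℝ) S := by
    refine ⟨hSpack, fun T hT hST => ?_⟩
    exact Finset.eq_of_subset_of_card_le hST (by rw [hScard]; exact card_le_aux n hn T hT)
  have hmem : (n - 2) ∈ {k : ℕ | ∃ S : Finset (Fin n),
      IsBetaPacking G (1/2 : ℝ) S ∧ S.card = k} := ⟨S, hmax, hScard⟩
  have hbdd : ∀ k ∈ {k : ℕ | ∃ S : Finset (Fin n),
      IsBetaPacking G (1/2 : ℝ) S ∧ S.card = k}, k ≤ n - 2 := by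
    rintro k ⟨T, hT, rfl⟩
    exact card_le_aux n hn T hT.1
  exact le_antisymm (csSup_le ⟨_, hmem⟩ hbdd) (le_csSup ⟨n - 2, hbdd⟩ hmem)
end

section
/- For a path graph P_n with n ≥ 2 vertices and any β with 1/2 ≤ β < 1, the β-packing number of P_n equals n - 2. -/
open scoped Classical

lemma finset_inter_indep {α : Type*} (i1 i2 : DecidableEq α) (a b : Finset α) :
    @Inter.inter _ (@Finset.instInter α i1) a b
      = @Inter.inter _ (@Finset.instInter α i2) a b := by
  have : i1 = i2 := by funext x y; exact Subsingleton.elim _ _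
  rw [this]

lemma neighborFinset_indep {V : Type*} (G : SimpleGraph V) (v : V)
    (i1 i2 : Fintype (G.neighborSet v)) :
    @SimpleGraph.neighborFinset V G v i1 = @SimpleGraph.neighborFinset V G v i2 := by
  have : i1 = i2 := Subsingleton.elim _ _
  rw [this]

lemma degree_indep {V : Type*} (G : SimpleGraph V) (v : V)
    (i1 i2 : Fintype (G.neighborSet v)) :
    @SimpleGraph.degree V G v i1 = @SimpleGraph.degree V G v i2 := by
  have : i1 = i2 := Subsingleton.elim _ _
  rw [this]

lemma path_deg_pos (n : ℕ) (hn : 2 ≤ n) (v : Fin n) :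
    0 < (SimpleGraph.pathGraph n).degree v := by
  rw [SimpleGraph.degree_pos_iff_exists_adj]
  rcases Nat.eq_zero_or_pos v.val with h | h
  · exact ⟨⟨1, by omega⟩, by rw [SimpleGraph.pathGraph_adj]; left; simp [h]⟩
  · exact ⟨⟨v.val - 1, by omega⟩, by rw [SimpleGraph.pathGraph_adj]; right; simp; omega⟩

lemma card_le_of_packProp {n : ℕ} (hn : 2 ≤ n) {β : ℝ} (hβ2 : β < 1)
    {S : Finset (Fin n)} (h : PackProp (SimpleGraph.pathGraph n) β S) :
    S.card ≤ n - 2 := by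
  obtain ⟨hne, hpack⟩ := h
  have hlt : S.card < n := by
    have := Finset.card_le_univ S
    rcases lt_or_eq_of_le this with h | h
    · simpa using h
    · exact absurd (Finset.eq_univ_of_card S (by simpa using h)) hne
  by_contra hc
  have hcard : (Finset.univ \ S).card = 1 := by
    rw [Finset.card_sdiff_of_subset (Finset.subset_univ S), Finset.card_univ, Fintype.card_fin]
    omega
  obtain ⟨v, hv⟩ := Finset.card_eq_one.mp hcard
  have hvS : v ∉ S := by
    have : v ∈ Finset.univ \ S := hv ▸ Finset.mem_singleton_self v
    exact (Finset.mem_sdiff.mp this).2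
  have hsub : (SimpleGraph.pathGraph n).neighborFinset v ∩ S
      = (SimpleGraph.pathGraph n).neighborFinset v := by
    apply Finset.inter_eq_left.mpr
    intro u hu
    by_contra huS
    have : u ∈ Finset.univ \ S := Finset.mem_sdiff.mpr ⟨Finset.mem_univ u, huS⟩
    rw [hv, Finset.mem_singleton] at this
    subst this
    exact (SimpleGraph.pathGraph n).irrefl (SimpleGraph.mem_neighborFinset _ _ _ |>.mp hu)
  have key := hpack v hvS
  rw [neighborFinset_indep _ _ _ inferInstance, degree_indep _ _ _ inferInstance,
    finset_inter_indep _ inferInstance] at key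
  rw [hsub, SimpleGraph.card_neighborFinset_eq_degree] at key
  have hdpos : 0 < (SimpleGraph.pathGraph n).degree v := path_deg_pos n hn v
  have : (0:ℝ) < ((SimpleGraph.pathGraph n).degree v : ℝ) := by exact_mod_cast hdpos
  nlinarith

lemma lower_packing (n : ℕ) (hn : 2 ≤ n) (β : ℝ) (hβ1 : 1/2 ≤ β) (hβ2 : β < 1) :
    ∃ S : Finset (Fin n), IsBetaPacking (SimpleGraph.pathGraph n) β S ∧ S.card = n - 2 := by
  set v0 : Fin n := ⟨0, by omega⟩ with hv0
  set v1 : Fin n := ⟨1, by omega⟩ with hv1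
  refine ⟨Finset.univ \ {v0, v1}, ?_⟩
  set S : Finset (Fin n) := Finset.univ \ {v0, v1} with hS
  have hv01 : v0 ≠ v1 := by simp [hv0, hv1, Fin.ext_iff]
  have hScard : S.card = n - 2 := by
    rw [hS, Finset.card_sdiff_of_subset (Finset.subset_univ _), Finset.card_univ, Fintype.card_fin,
      Finset.card_insert_of_notMem (by simpa using hv01), Finset.card_singleton]
  have hβpos : (0:ℝ) ≤ β := by linarith
  have hempty2 : n < 3 → S = ∅ := by
    intro h3
    rw [hS, Finset.sdiff_eq_empty_iff_subset]
    intro u _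
    have : u.val = 0 ∨ u.val = 1 := by omega
    rcases this with h | h <;> simp [Fin.ext_iff, h, hv0, hv1]
  have hprop : PackProp (SimpleGraph.pathGraph n) β S := by
    constructor
    · intro h
      have : v0 ∈ S := h ▸ Finset.mem_univ v0
      simp [hS] at this
    · intro v hv
      rw [neighborFinset_indep _ _ _ inferInstance, degree_indep _ _ _ inferInstance,
        finset_inter_indep _ inferInstance]
      have hv' : v = v0 ∨ v = v1 := by
        by_contra h
        push_neg at h
        exact hv (by simp [hS, h.1, h.2])
      rcases hv' with rfl | rfl
      · -- v0's only neighbor is v1, not in S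
        have he : (SimpleGraph.pathGraph n).neighborFinset v0 ∩ S = ∅ := by
          rw [Finset.eq_empty_iff_forall_notMem]
          intro u hu
          rw [Finset.mem_inter, SimpleGraph.mem_neighborFinset,
            SimpleGraph.pathGraph_adj] at hu
          obtain ⟨h1, h2⟩ := hu
          have hu1 : u = v1 := by
            rw [Fin.ext_iff]
            simp only [hv0, hv1] at h1 ⊢
            omega
          rw [hS, Finset.mem_sdiff] at h2
          exact h2.2 (by simp [hu1])
        rw [he]
        simp only [Finset.card_empty, Nat.cast_zero]
        positivity
      · -- v1: intersection ⊆ {⟨2,_⟩}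
        have hsub : ((SimpleGraph.pathGraph n).neighborFinset v1 ∩ S).card ≤ 1 := by
          rcases Nat.lt_or_ge n 3 with h3 | h3
          · rw [hempty2 h3]; simp
          · refine le_trans (Finset.card_le_card (t := {(⟨2, by omega⟩ : Fin n)}) ?_)
              (by simp)
            intro u hu
            rw [Finset.mem_inter, SimpleGraph.mem_neighborFinset,
              SimpleGraph.pathGraph_adj, hS, Finset.mem_sdiff] at hu
            obtain ⟨h1, _, h2⟩ := hu
            simp only [Finset.mem_insert, Finset.mem_singleton] at h2
            push_neg at h2
            rw [Finset.mem_singleton, Fin.ext_iff]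
            simp only [hv0, hv1, ne_eq, Fin.ext_iff, Fin.val_mk] at h1 h2 ⊢
            omega
        rcases Nat.lt_or_ge n 3 with h3 | h3
        · rw [hempty2 h3]
          simp only [Finset.inter_empty, Finset.card_empty, Nat.cast_zero]
          positivity
        · have hdeg : 2 ≤ (SimpleGraph.pathGraph n).degree v1 := by
            have hsub2 : ({v0, (⟨2, by omega⟩ : Fin n)} : Finset (Fin n)) ⊆
                (SimpleGraph.pathGraph n).neighborFinset v1 := by
              intro u hu
              rw [Finset.mem_insert, Finset.mem_singleton] at hu
              rw [SimpleGraph.mem_neighborFinset, SimpleGraph.pathGraph_adj]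
              rcases hu with rfl | rfl
              · right; simp [hv0, hv1]
              · left; simp [hv1]
            calc 2 = ({v0, (⟨2, by omega⟩ : Fin n)} : Finset (Fin n)).card := by
                  rw [Finset.card_insert_of_notMem (by simp [hv0, Fin.ext_iff]),
                    Finset.card_singleton]
              _ ≤ _ := Finset.card_le_card hsub2
              _ = _ := SimpleGraph.card_neighborFinset_eq_degree _ _
          have h1 : (((SimpleGraph.pathGraph n).neighborFinset v1 ∩ S).card : ℝ) ≤ 1 := by
            exact_mod_cast hsub
          have h2 : (2:ℝ) ≤ ((SimpleGraph.pathGraph n).degree v1 : ℝ) := by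
            exact_mod_cast hdeg
          nlinarith
  refine ⟨⟨hprop, fun T hT hsubT => ?_⟩, hScard⟩
  apply Finset.eq_of_subset_of_card_le hsubT
  have := card_le_of_packProp hn hβ2 hT
  omega

theorem stmt_1 (n : ℕ) (hn : 2 ≤ n) (β : ℝ) (hβ1 : 1/2 ≤ β) (hβ2 : β < 1) :
    betaPack (SimpleGraph.pathGraph n) β = n - 2 := by
  obtain ⟨S, hS, hcard⟩ := lower_packing n hn β hβ1 hβ2
  have hmem : (n - 2) ∈ {k : ℕ | ∃ S : Finset (Fin n),
      IsBetaPacking (SimpleGraph.pathGraph n) β S ∧ S.card = k} := ⟨S, hS, hcard⟩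
  have hbdd : ∀ k ∈ {k : ℕ | ∃ S : Finset (Fin n),
      IsBetaPacking (SimpleGraph.pathGraph n) β S ∧ S.card = k}, k ≤ n - 2 := by
    rintro k ⟨T, hT, rfl⟩
    exact card_le_of_packProp hn hβ2 hT.1
  exact le_antisymm (csSup_le ⟨_, hmem⟩ hbdd) (le_csSup ⟨n - 2, hbdd⟩ hmem)
end

section
/- For a cycle graph C_n with n ≥ 3 and any β with 1/2 ≤ β < 1, the β-packing number of C_n equals n - 2. -/
open scoped Classical

/-!
A vertex outside a β-packing set `S` with `β < 1` cannot have all of its neighbours in `S`.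
So if `G` has no isolated vertices, `S` misses some vertex together with one of its neighbours,
and `|S| ≤ |V| - 2`. In a 2-regular graph with `1/2 ≤ β` this bound is attained by the
complement of any edge `uw`: each endpoint has exactly one neighbour in it, and adding `u`
(resp. `w`) would leave `w` (resp. `u`) outside with both neighbours inside.
-/

section

open SimpleGraph

variable {V : Type*} [Fintype V] {G : SimpleGraph V} {β : ℝ} {S T : Finset V}

theorem PackProp.exists_adj_notMem (hβ : β < 1) (hS : PackProp G β S) {v : V} (hv : v ∉ S)
    (hdeg : 0 < G.degree v) : ∃ w, G.Adj v w ∧ w ∉ S := by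
  by_contra! hall
  have hinter : G.neighborFinset v ∩ S = G.neighborFinset v :=
    Finset.inter_eq_left.mpr fun w hw => hall w ((G.mem_neighborFinset v w).mp hw)
  have hle := hS.2 v hv
  rw [hinter, card_neighborFinset_eq_degree] at hle
  have : (0 : ℝ) < G.degree v := by exact_mod_cast hdeg
  nlinarith

theorem PackProp.card_le_card_sub_two (hβ : β < 1) (hdeg : ∀ v, 0 < G.degree v)
    (hS : PackProp G β S) : S.card ≤ Fintype.card V - 2 := by
  obtain ⟨v, hv⟩ : ∃ v, v ∉ S := by
    by_contra! h
    exact hS.1 (Finset.eq_univ_iff_forall.mpr h)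
  obtain ⟨w, hvw, hw⟩ := hS.exists_adj_notMem hβ hv (hdeg v)
  have hsub : S ⊆ {v, w}ᶜ := fun x hx => by
    simp only [Finset.mem_compl, Finset.mem_insert, Finset.mem_singleton]
    rintro (rfl | rfl) <;> contradiction
  calc S.card ≤ ({v, w}ᶜ : Finset V).card := Finset.card_le_card hsub
    _ = Fintype.card V - 2 := by rw [Finset.card_compl, Finset.card_pair hvw.ne]

theorem PackProp.notMem_of_compl_edge_subset (hβ : β < 1) (hdeg : ∀ v, 0 < G.degree v)
    (hT : PackProp G β T) {u w : V} (huw : G.Adj u w) (hsub : {u, w}ᶜ ⊆ T) : u ∉ T := by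
  intro hu
  have hw : w ∉ T := fun hw => hT.1 <| Finset.eq_univ_iff_forall.mpr fun x => by
    by_cases hx : x ∈ ({u, w} : Finset V)
    · simp only [Finset.mem_insert, Finset.mem_singleton] at hx
      rcases hx with rfl | rfl <;> assumption
    · exact hsub (Finset.mem_compl.mpr hx)
  obtain ⟨z, hwz, hz⟩ := hT.exists_adj_notMem hβ hw (hdeg w)
  have hz' : z = u ∨ z = w := by
    by_contra h
    exact hz (hsub (by simpa using h))
  rcases hz' with rfl | rfl
  · exact hz hu
  · exact hwz.ne rfl

theorem isBetaPacking_compl_edge (hG : G.IsRegularOfDegree 2) (hβ₁ : 1 / 2 ≤ β)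
    (hβ₂ : β < 1) {u w : V} (huw : G.Adj u w) : IsBetaPacking G β {u, w}ᶜ := by
  have hdeg : ∀ v, 0 < G.degree v := fun v => hG v ▸ two_pos
  refine ⟨⟨fun h => ?_, fun v hv => ?_⟩, fun T hT hsub => ?_⟩
  · have hu : u ∈ ({u, w}ᶜ : Finset V) := h ▸ Finset.mem_univ u
    simp at hu
  · obtain ⟨x, hvx, hx⟩ : ∃ x, G.Adj v x ∧ x ∉ ({u, w}ᶜ : Finset V) := by
      have huv : v = u ∨ v = w := by
        simpa only [Finset.mem_compl, not_not, Finset.mem_insert, Finset.mem_singleton] using hv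
      rcases huv with rfl | rfl
      · exact ⟨w, huw, by simp⟩
      · exact ⟨u, huw.symm, by simp⟩
    have hlt : (G.neighborFinset v ∩ {u, w}ᶜ).card < G.degree v :=
      Finset.card_lt_card <| Finset.ssubset_iff_of_subset Finset.inter_subset_left |>.mpr
        ⟨x, (G.mem_neighborFinset v x).mpr hvx, fun h => hx (Finset.mem_inter.mp h).2⟩
    rw [hG v] at hlt ⊢
    have : ((G.neighborFinset v ∩ {u, w}ᶜ).card : ℝ) ≤ 1 := by
      exact_mod_cast Nat.lt_succ_iff.mp hlt
    push_cast
    linarith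
  · refine hsub.antisymm fun x hxT => Finset.mem_compl.mpr fun hx => ?_
    rcases (by simpa using hx : x = u ∨ x = w) with rfl | rfl
    · exact hT.notMem_of_compl_edge_subset hβ₂ hdeg huw hsub hxT
    · exact hT.notMem_of_compl_edge_subset hβ₂ hdeg huw.symm (Finset.pair_comm u x ▸ hsub) hxT

theorem betaPack_eq_of_isBetaPacking {k : ℕ} (hS : IsBetaPacking G β S) (hcard : S.card = k)
    (hle : ∀ T, IsBetaPacking G β T → T.card ≤ k) : betaPack G β = k := by
  have hbdd : BddAbove {k : ℕ | ∃ S : Finset V, IsBetaPacking G β S ∧ S.card = k} :=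
    ⟨k, by rintro _ ⟨T, hT, rfl⟩; exact hle T hT⟩
  exact le_antisymm (csSup_le ⟨k, S, hS, hcard⟩ (by rintro _ ⟨T, hT, rfl⟩; exact hle T hT))
    (le_csSup hbdd ⟨S, hS, hcard⟩)

theorem SimpleGraph.IsRegularOfDegree.betaPack_eq_card_sub_two [Nonempty V]
    (hG : G.IsRegularOfDegree 2) (hβ₁ : 1 / 2 ≤ β) (hβ₂ : β < 1) :
    betaPack G β = Fintype.card V - 2 := by
  have hdeg : ∀ v, 0 < G.degree v := fun v => hG v ▸ two_pos
  obtain ⟨u⟩ := ‹Nonempty V›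
  obtain ⟨w, huw⟩ := (G.degree_pos_iff_exists_adj u).mp (hdeg u)
  refine betaPack_eq_of_isBetaPacking (isBetaPacking_compl_edge hG hβ₁ hβ₂ huw) ?_
    fun T hT => hT.1.card_le_card_sub_two hβ₂ hdeg
  rw [Finset.card_compl, Finset.card_pair huw.ne]

end

theorem stmt_4 (n : ℕ) (hn : 3 ≤ n) (β : ℝ) (hβ1 : 1/2 ≤ β) (hβ2 : β < 1) :
    betaPack (SimpleGraph.cycleGraph n) β = n - 2 := by
  obtain ⟨m, rfl⟩ : ∃ m, n = m + 3 := ⟨n - 3, by omega⟩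
  -- Mathlib computes the degrees of `cycleGraph` with its own decidability instance for adjacency,
  -- while `betaPack` uses the classical one; `convert` reconciles them.
  have hpack := SimpleGraph.IsRegularOfDegree.betaPack_eq_card_sub_two
    (G := SimpleGraph.cycleGraph (m + 3))
    (fun _ => by convert SimpleGraph.cycleGraph_degree_three_le) hβ1 hβ2
  rw [hpack, Fintype.card_fin]
end

section
/- For any β-packing set S of a graph G = (V, E), the induced subgraph on V \ S is connected. -/
open scoped Classical

theorem stmt_10 {V : Type*} [Fintype V] (G : SimpleGraph V) (β : ℝ)
    (hβ0 : 0 < β) (hβ1 : β ≤ 1) (S : Finset V) (hS : IsBetaPacking G β S) :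
    (G.induce ((↑(Sᶜ) : Set V))).Connected := by
  classical
  obtain ⟨⟨hSne, hSpack⟩, hmax⟩ := hS
  have hne : (Sᶜ : Finset V).Nonempty := by
    rw [Finset.nonempty_iff_ne_empty]
    simpa [Finset.compl_eq_empty_iff] using hSne
  rw [SimpleGraph.connected_iff]
  constructor
  · -- Preconnected
    rintro ⟨u, hu⟩ ⟨w, hw⟩
    by_contra hreach
    set A : Finset V := Finset.univ.filter
      (fun x => ∃ hx : x ∈ (((Sᶜ : Finset V) : Set V)),
        (G.induce (((Sᶜ : Finset V) : Set V))).Reachable ⟨u, hu⟩ ⟨x, hx⟩) with hA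
    have hmemA : ∀ x, x ∈ A ↔ ∃ hx : x ∈ (((Sᶜ : Finset V) : Set V)),
        (G.induce (((Sᶜ : Finset V) : Set V))).Reachable ⟨u, hu⟩ ⟨x, hx⟩ := by
      intro x; simp [hA]
    have hAclosed : ∀ y x, y ∈ A → G.Adj y x → x ∉ S → x ∈ A := by
      intro y x hy hadj hxS
      have hx : x ∈ (((Sᶜ : Finset V) : Set V)) := by simpa using hxS
      obtain ⟨hy', hr⟩ := (hmemA y).1 hy
      refine (hmemA x).2 ⟨hx, hr.trans ?_⟩
      exact SimpleGraph.Adj.reachable (by exact hadj)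
    have hpackT : PackProp G β (S ∪ A) := by
      constructor
      · intro h
        have hwS : w ∉ S := by simpa using hw
        have hwin : w ∈ S ∪ A := h ▸ Finset.mem_univ w
        rcases Finset.mem_union.1 hwin with h1 | h1
        · exact hwS h1
        · obtain ⟨hw', hr⟩ := (hmemA w).1 h1
          exact hreach hr
      · intro x hx
        have hxS : x ∉ S := fun h => hx (Finset.mem_union_left _ h)
        have hxA : x ∉ A := fun h => hx (Finset.mem_union_right _ h)
        have heq : G.neighborFinset x ∩ (S ∪ A) = G.neighborFinset x ∩ S := by
          ext y
          simp only [Finset.mem_inter, Finset.mem_union, SimpleGraph.mem_neighborFinset]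
          constructor
          · rintro ⟨hadj, h1 | h1⟩
            · exact ⟨hadj, h1⟩
            · exact absurd (hAclosed y x h1 hadj.symm hxS) hxA
          · rintro ⟨hadj, h1⟩; exact ⟨hadj, Or.inl h1⟩
        rw [heq]
        exact hSpack x hxS
    have hsub : S ⊆ S ∪ A := Finset.subset_union_left
    have hST := hmax _ hpackT hsub
    have huS : u ∉ S := by simpa using hu
    have huA : u ∈ A := (hmemA u).2 ⟨hu, SimpleGraph.Reachable.refl _⟩
    have huS' : u ∈ S := by rw [hST]; exact Finset.mem_union_right _ huA
    exact huS huS'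
  · -- Nonempty
    obtain ⟨x, hx⟩ := hne
    exact ⟨⟨x, by simpa using hx⟩⟩
end

section
/- Let G be a connected graph on n ≥ 2 vertices. If 0 < β < 1, then the β-packing number of G is strictly less than n - 1. -/
open scoped Classical

lemma deg_pos {V : Type*} [Fintype V] (G : SimpleGraph V) (hG : G.Connected)
    (hn : 2 ≤ Fintype.card V) (v : V) : 0 < G.degree v := by
  obtain ⟨w, hw⟩ := Fintype.exists_ne_of_one_lt_card hn v
  obtain ⟨p⟩ := hG.preconnected v w
  have hnil : ¬ p.Nil := SimpleGraph.Walk.not_nil_of_ne hw.symm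
  rw [G.degree_pos_iff_exists_adj]
  exact ⟨_, p.adj_snd hnil⟩

theorem stmt_12 {V : Type*} [Fintype V] (G : SimpleGraph V) (hG : G.Connected)
    (hn : 2 ≤ Fintype.card V) (β : ℝ) (hβ0 : 0 < β) (hβ1 : β < 1) :
    betaPack G β < Fintype.card V - 1 := by
  have h1 : 1 ≤ Fintype.card V - 1 := by omega
  have key : ∀ k ∈ {k : ℕ | ∃ S : Finset V, IsBetaPacking G β S ∧ S.card = k},
      k ≤ Fintype.card V - 2 := by
    rintro k ⟨S, ⟨⟨hne, hpack⟩, _⟩, rfl⟩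
    by_contra hk
    push_neg at hk
    have hlt : S.card < Fintype.card V := by
      have := S.card_le_univ
      rcases lt_or_eq_of_le (by simpa using this) with h | h
      · exact h
      · exact absurd (Finset.eq_univ_of_card S (by simpa using h)) hne
    have hcard : S.card = Fintype.card V - 1 := by omega
    -- the unique vertex outside S
    have hcompl : Sᶜ.card = 1 := by
      rw [Finset.card_compl, hcard]; omega
    obtain ⟨v, hv⟩ := Finset.card_eq_one.mp hcompl
    have hvS : v ∉ S := by
      have : v ∈ Sᶜ := hv ▸ Finset.mem_singleton_self v
      simpa using this
    have hsub : G.neighborFinset v ⊆ S := by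
      intro w hw
      by_contra hwS
      have : w ∈ Sᶜ := Finset.mem_compl.mpr hwS
      rw [hv, Finset.mem_singleton] at this
      subst this
      simp at hw
    have hinter : (G.neighborFinset v ∩ S) = G.neighborFinset v :=
      Finset.inter_eq_left.mpr hsub
    have hb := hpack v hvS
    rw [hinter, SimpleGraph.card_neighborFinset_eq_degree] at hb
    have hd : (0:ℝ) < G.degree v := by exact_mod_cast deg_pos G hG hn v
    nlinarith
  have : betaPack G β ≤ Fintype.card V - 2 := csSup_le' key
  omega
end

section
/- For the complete multipartite graph K_{3,3,3,3} and β = 1/2, the β-packing number equals 5; in particular it is strictly greater than ⌊β·3⌋·4 = 4. -/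
open scoped Classical

abbrev VV := Σ _ : Fin 4, Fin 3

def Q (S : Finset VV) : Prop :=
  S ≠ Finset.univ ∧ ∀ v : VV, v ∈ S ∨ 2 * (S.filter (fun w => v.1 ≠ w.1)).card ≤ 9

instance : DecidablePred Q := fun S => by unfold Q; infer_instance

lemma card_filter9 : ∀ v : VV, (Finset.univ.filter (fun w : VV => v.1 ≠ w.1)).card = 9 := by
  decide

lemma packiff (S : Finset VV) :
    PackProp (SimpleGraph.completeMultipartiteGraph (fun _ : Fin 4 => Fin 3)) (1/2 : ℝ) S ↔ Q S := by
  unfold PackProp Q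
  refine and_congr Iff.rfl ?_
  have hN : ∀ (v : VV) (inst : Fintype ((SimpleGraph.completeMultipartiteGraph (fun _ : Fin 4 => Fin 3)).neighborSet v)),
      @SimpleGraph.neighborFinset VV (SimpleGraph.completeMultipartiteGraph (fun _ : Fin 4 => Fin 3)) v inst
        = Finset.univ.filter (fun w : VV => v.1 ≠ w.1) := by
    intro v inst; ext w; simp [SimpleGraph.mem_neighborFinset]
  have hdeg : ∀ (v : VV) (inst : Fintype ((SimpleGraph.completeMultipartiteGraph (fun _ : Fin 4 => Fin 3)).neighborSet v)),
      @SimpleGraph.degree VV (SimpleGraph.completeMultipartiteGraph (fun _ : Fin 4 => Fin 3)) v inst = 9 := by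
    intro v inst
    rw [← SimpleGraph.card_neighborFinset_eq_degree, hN, card_filter9]
  have hI : ∀ (v : VV) (d : DecidableEq VV),
      @Inter.inter _ (@Finset.instInter VV d) (Finset.univ.filter (fun w : VV => v.1 ≠ w.1)) S
        = S.filter (fun w => v.1 ≠ w.1) := by
    intro v d; ext w; simp [Finset.mem_inter, and_comm]
  constructor
  · intro h v
    by_cases hv : v ∈ S
    · exact Or.inl hv
    · refine Or.inr ?_
      have h2 := h v hv
      rw [hdeg v _, hN v _, hI v _] at h2
      have h3 : ((2 * (S.filter (fun w => v.1 ≠ w.1)).card : ℕ) : ℝ) ≤ 9 := by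
        push_cast at h2 ⊢; linarith
      exact_mod_cast h3
  · intro h v hv
    rcases h v with h' | h'
    · exact absurd h' hv
    · rw [hdeg v _, hN v _, hI v _]
      have h3 : ((2 * (S.filter (fun w => v.1 ≠ w.1)).card : ℕ) : ℝ) ≤ 9 := by exact_mod_cast h'
      push_cast at h3 ⊢
      linarith

lemma partcard : ∀ i : Fin 4, (Finset.univ.filter (fun w : VV => w.1 = i)).card = 3 := by
  decide

lemma split (T : Finset VV) (v : VV) :
    (T.filter (fun w => v.1 ≠ w.1)).card + (T.filter (fun w => w.1 = v.1)).card = T.card := by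
  have h := Finset.card_filter_add_card_filter_not (s := T)
    (p := fun w : VV => v.1 ≠ w.1)
  have he : (T.filter (fun a => ¬ v.1 ≠ a.1)) = T.filter (fun w => w.1 = v.1) := by
    ext w; simp [eq_comm]
  rw [he] at h
  exact h

lemma fiber_le (T : Finset VV) (v : VV) (hv : v ∉ T) :
    (T.filter (fun w => w.1 = v.1)).card ≤ 2 := by
  have hsub : T.filter (fun w => w.1 = v.1) ⊆
      (Finset.univ.filter (fun w : VV => w.1 = v.1)).erase v := by
    intro w hw
    simp only [Finset.mem_filter, Finset.mem_erase, Finset.mem_univ, true_and] at hw ⊢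
    exact ⟨fun h => hv (h ▸ hw.1), hw.2⟩
  have := Finset.card_le_card hsub
  have h2 := Finset.card_erase_le (s := Finset.univ.filter (fun w : VV => w.1 = v.1)) (a := v)
  have h3 : ((Finset.univ.filter (fun w : VV => w.1 = v.1)).erase v).card ≤ 2 := by
    have hmem : v ∈ Finset.univ.filter (fun w : VV => w.1 = v.1) := by simp
    rw [Finset.card_erase_of_mem hmem, partcard]
  omega

lemma bound : ∀ T : Finset VV, Q T → T.card ≤ 5 := by
  rintro T ⟨hne, hq⟩
  obtain ⟨v, hv⟩ : ∃ v : VV, v ∉ T := by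
    by_contra hc
    push_neg at hc
    exact hne (Finset.eq_univ_iff_forall.2 hc)
  have hv4 : (T.filter (fun w => v.1 ≠ w.1)).card ≤ 4 := by
    rcases hq v with h | h
    · exact absurd h hv
    · omega
  have hle6 : T.card ≤ 6 := by
    have := split T v
    have := fiber_le T v hv
    omega
  rcases Nat.lt_or_ge T.card 6 with h6 | h6
  · omega
  have hcard : T.card = 6 := by omega
  exfalso
  -- every part has at least 2 elements of T
  have hall : ∀ i : Fin 4, 2 ≤ (T.filter (fun w : VV => w.1 = i)).card := by
    intro i
    by_cases hfull : ∀ u : VV, u.1 = i → u ∈ T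
    · have : T.filter (fun w : VV => w.1 = i) = Finset.univ.filter (fun w : VV => w.1 = i) := by
        ext w
        simp only [Finset.mem_filter, Finset.mem_univ, true_and]
        exact ⟨fun h => h.2, fun h => ⟨hfull w h, h⟩⟩
      rw [this, partcard]; omega
    · push_neg at hfull
      obtain ⟨u, hu1, hu2⟩ := hfull
      have h4 : (T.filter (fun w => u.1 ≠ w.1)).card ≤ 4 := by
        rcases hq u with h | h
        · exact absurd h hu2
        · omega
      have hs := split T u
      rw [hu1] at hs h4
      omega
  have hsum : T.card = ∑ i : Fin 4, (T.filter (fun w : VV => w.1 = i)).card := by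
    exact Finset.card_eq_sum_card_fiberwise (fun x _ => Finset.mem_univ x.1)
  have h8 : (8 : ℕ) ≤ ∑ i : Fin 4, (T.filter (fun w : VV => w.1 = i)).card := by
    calc (8:ℕ) = ∑ _i : Fin 4, 2 := by simp
    _ ≤ _ := Finset.sum_le_sum (fun i _ => hall i)
  omega

def S0 : Finset VV := {⟨0,0⟩, ⟨0,1⟩, ⟨1,0⟩, ⟨2,0⟩, ⟨3,0⟩}

lemma qS0 : Q S0 := by decide

lemma cS0 : S0.card = 5 := by decide

theorem stmt_15 :
    betaPack (SimpleGraph.completeMultipartiteGraph (fun _ : Fin 4 => Fin 3)) (1/2 : ℝ) = 5 ∧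
      4 < betaPack (SimpleGraph.completeMultipartiteGraph (fun _ : Fin 4 => Fin 3)) (1/2 : ℝ) := by
  have key : IsBetaPacking (SimpleGraph.completeMultipartiteGraph (fun _ : Fin 4 => Fin 3)) (1/2 : ℝ) S0 := by
    refine ⟨(packiff _).2 qS0, fun T hT hsub => ?_⟩
    exact Finset.eq_of_subset_of_card_le hsub (by rw [cS0]; exact bound T ((packiff T).1 hT))
  have hmem : (5 : ℕ) ∈ {k : ℕ | ∃ S : Finset VV,
      IsBetaPacking (SimpleGraph.completeMultipartiteGraph (fun _ : Fin 4 => Fin 3)) (1/2 : ℝ) S ∧ S.card = k} :=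
    ⟨S0, key, cS0⟩
  have hub : ∀ k ∈ {k : ℕ | ∃ S : Finset VV,
      IsBetaPacking (SimpleGraph.completeMultipartiteGraph (fun _ : Fin 4 => Fin 3)) (1/2 : ℝ) S ∧ S.card = k}, k ≤ 5 := by
    rintro k ⟨S, hS, rfl⟩
    exact bound S ((packiff S).1 hS.1)
  have heq : betaPack (SimpleGraph.completeMultipartiteGraph (fun _ : Fin 4 => Fin 3)) (1/2 : ℝ) = 5 := by
    unfold betaPack
    exact le_antisymm (csSup_le ⟨5, hmem⟩ hub) (le_csSup ⟨5, hub⟩ hmem)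
  exact ⟨heq, by omega⟩
end

section
/- There exists a graph G and a value α = β such that the α-domination number of G is strictly greater than the β-packing number of G. Specifically, for G = P_n with n ≥ 3 and α = β = 1/3, β-pack(P_n) = 0 while γ_{1/3}(P_n) = ⌈n/3⌉ > 0. -/
/-!
When every degree is `1` or `2`, the thresholds `deg v / 3` lie strictly between `0` and `1`, so a
`1/3`-dominating set is just a dominating set, and a vertex outside a `1/3`-packing set has no
neighbour inside it. In the connected path `P_n` the latter forces every packing set to be empty,
whereas each vertex of a dominating set covers at most three vertices of `P_n`, and the vertices
`1, 4, 7, …` (capped at `n - 1`) show that `⌈n/3⌉` of them suffice.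
-/

open scoped Classical

/-- `S` is an α-dominating set. -/
def IsAlphaDom {V : Type*} [Fintype V] (G : SimpleGraph V) (α : ℝ) (S : Finset V) : Prop :=
  ∀ v ∉ S, α * (G.degree v : ℝ) ≤ ((G.neighborFinset v ∩ S).card : ℝ)

/-- The α-domination number: minimum cardinality of an α-dominating set. -/
noncomputable def alphaDomNum {V : Type*} [Fintype V] (G : SimpleGraph V) (α : ℝ) : ℕ :=
  sInf {k : ℕ | ∃ S : Finset V, IsAlphaDom G α S ∧ S.card = k}

open SimpleGraph

section

variable {V : Type*} [Fintype V] {G : SimpleGraph V} {S : Finset V}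

lemma SimpleGraph.card_neighborFinset_inter_pos_iff {v : V} :
    0 < (G.neighborFinset v ∩ S).card ↔ ∃ u ∈ S, G.Adj v u := by
  simp only [Finset.card_pos, Finset.Nonempty, Finset.mem_inter, mem_neighborFinset, and_comm]

lemma PackProp.not_adj {β : ℝ} (hβ : ∀ v, β * G.degree v < 1) (hS : PackProp G β S)
    {v u : V} (hv : v ∉ S) (hvu : G.Adj v u) : u ∉ S := by
  intro hu
  have hpos : (1 : ℝ) ≤ (G.neighborFinset v ∩ S).card := by
    exact_mod_cast card_neighborFinset_inter_pos_iff.mpr ⟨u, hu, hvu⟩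
  linarith [hS.2 v hv, hβ v]

/-- No edge leaves the complement of a packing set, so connectivity leaves no room for it. -/
lemma PackProp.eq_empty {β : ℝ} (hG : G.Preconnected) (hβ : ∀ v, β * G.degree v < 1)
    (hS : PackProp G β S) : S = ∅ := by
  by_contra hne
  obtain ⟨s, hs⟩ := Finset.nonempty_iff_ne_empty.mpr hne
  obtain ⟨t, ht⟩ : ∃ t, t ∉ S := by
    by_contra! hall
    exact hS.1 (Finset.eq_univ_iff_forall.mpr hall)
  obtain ⟨p⟩ := hG t s
  obtain ⟨d, -, hd, hd'⟩ := p.exists_boundary_dart {x | x ∉ S} ht (by simpa using hs)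
  exact hd' (hS.not_adj hβ hd d.adj)

lemma isBetaPacking_iff_eq_empty [Nonempty V] {β : ℝ} (hG : G.Preconnected) (hβ₀ : 0 ≤ β)
    (hβ : ∀ v, β * G.degree v < 1) : IsBetaPacking G β S ↔ S = ∅ := by
  have hempty : PackProp G β ∅ :=
    ⟨Finset.univ_nonempty.ne_empty.symm, fun v _ => by
      simp only [Finset.inter_empty, Finset.card_empty, Nat.cast_zero]; positivity⟩
  refine ⟨fun hS => hS.1.eq_empty hG hβ, ?_⟩
  rintro rfl
  exact ⟨hempty, fun T hT _ => (hT.eq_empty hG hβ).symm⟩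

lemma betaPack_eq_zero [Nonempty V] {β : ℝ} (hG : G.Preconnected) (hβ₀ : 0 ≤ β)
    (hβ : ∀ v, β * G.degree v < 1) : betaPack G β = 0 := by
  have hset : {k : ℕ | ∃ S : Finset V, IsBetaPacking G β S ∧ S.card = k} = {0} := by
    ext k
    simp [isBetaPacking_iff_eq_empty hG hβ₀ hβ, eq_comm]
  rw [betaPack, hset, csSup_singleton]

lemma isAlphaDom_iff {α : ℝ} (hα₀ : ∀ v, 0 < α * G.degree v)
    (hα : ∀ v, α * G.degree v ≤ 1) :
    IsAlphaDom G α S ↔ ∀ v ∉ S, ∃ u ∈ S, G.Adj v u := by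
  refine forall₂_congr fun v _ => ?_
  rw [← card_neighborFinset_inter_pos_iff]
  constructor
  · intro h
    exact_mod_cast (hα₀ v).trans_le h
  · intro h
    exact (hα v).trans (by exact_mod_cast h)

lemma SimpleGraph.card_le_mul_card_of_dominating {Δ : ℕ} (hΔ : ∀ v, G.degree v ≤ Δ)
    (hS : ∀ v ∉ S, ∃ u ∈ S, G.Adj v u) : Fintype.card V ≤ S.card * (Δ + 1) := by
  have hcover : Finset.univ ⊆ S.biUnion fun s => insert s (G.neighborFinset s) := by
    intro v _
    rw [Finset.mem_biUnion]
    by_cases hv : v ∈ S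
    · exact ⟨v, hv, Finset.mem_insert_self _ _⟩
    · obtain ⟨u, hu, hvu⟩ := hS v hv
      exact ⟨u, hu, Finset.mem_insert_of_mem ((mem_neighborFinset _ _ _).mpr hvu.symm)⟩
  calc Fintype.card V ≤ (S.biUnion fun s => insert s (G.neighborFinset s)).card :=
        Finset.card_le_card hcover
    _ ≤ S.card * (Δ + 1) :=
        Finset.card_biUnion_le_card_mul _ _ _ fun s _ =>
          (Finset.card_insert_le _ _).trans (Nat.succ_le_succ (hΔ s))

end

section

variable {n : ℕ}

lemma SimpleGraph.pathGraph_degree_le_two (v : Fin n) : (pathGraph n).degree v ≤ 2 := by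
  rw [← card_neighborFinset_eq_degree]
  calc _ ≤ ({v.val + 1, v.val - 1} : Finset ℕ).card := by
        refine Finset.card_le_card_of_injOn Fin.val (fun u hu => ?_) Fin.val_injective.injOn
        simp only [Finset.mem_coe, mem_neighborFinset, pathGraph_adj] at hu
        simp only [Finset.coe_insert, Finset.coe_singleton, Set.mem_insert_iff,
          Set.mem_singleton_iff]
        omega
    _ ≤ 2 := Finset.card_le_two

lemma SimpleGraph.pathGraph_degree_pos (hn : 2 ≤ n) (v : Fin n) :
    0 < (pathGraph n).degree v := by
  rw [degree_pos_iff_exists_adj]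
  by_cases h : v.val + 1 < n
  · exact ⟨⟨v + 1, h⟩, pathGraph_adj.mpr (Or.inl rfl)⟩
  · exact ⟨⟨v - 1, by omega⟩, pathGraph_adj.mpr (Or.inr (by simp only; omega))⟩

/-- The vertex `min (3 ⌊v/3⌋ + 1) (n - 1)` is `v` or one of its neighbours. -/
lemma SimpleGraph.pathGraph_exists_dominating {k : ℕ} (hn : 0 < n) (hk : n ≤ 3 * k) :
    ∃ S : Finset (Fin n), S.card ≤ k ∧ ∀ v ∉ S, ∃ u ∈ S, (pathGraph n).Adj v u := by
  let c : ℕ → Fin n := fun i => ⟨min (3 * i + 1) (n - 1), by omega⟩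
  refine ⟨(Finset.range k).image c, Finset.card_image_le.trans (Finset.card_range k).le, ?_⟩
  intro v hv
  have hmem : c (v / 3) ∈ (Finset.range k).image c :=
    Finset.mem_image_of_mem c (Finset.mem_range.mpr (by omega))
  have hc : c (v / 3) = v ∨ (pathGraph n).Adj v (c (v / 3)) := by
    simp only [c, Fin.ext_iff, pathGraph_adj]
    omega
  rcases hc with h | h
  · exact absurd (h ▸ hmem) hv
  · exact ⟨_, hmem, h⟩

lemma betaPack_pathGraph (hn : 0 < n) {β : ℝ} (hβ₀ : 0 ≤ β) (hβ : β < 1 / 2) :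
    betaPack (pathGraph n) β = 0 := by
  have : Nonempty (Fin n) := Fin.pos_iff_nonempty.mp hn
  refine betaPack_eq_zero (pathGraph_preconnected n) hβ₀ fun v => ?_
  have hdeg : ((pathGraph n).degree v : ℝ) ≤ 2 := by exact_mod_cast pathGraph_degree_le_two v
  nlinarith

lemma alphaDomNum_pathGraph (hn : 2 ≤ n) {α : ℝ} (hα₀ : 0 < α) (hα : α ≤ 1 / 2) :
    alphaDomNum (pathGraph n) α = ⌈(n : ℝ) / 3⌉₊ := by
  have hdom (S : Finset (Fin n)) :
      IsAlphaDom (pathGraph n) α S ↔ ∀ v ∉ S, ∃ u ∈ S, (pathGraph n).Adj v u := by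
    refine isAlphaDom_iff (fun v => mul_pos hα₀ ?_) (fun v => ?_)
    · exact_mod_cast pathGraph_degree_pos hn v
    · have hdeg : ((pathGraph n).degree v : ℝ) ≤ 2 := by
        exact_mod_cast pathGraph_degree_le_two v
      nlinarith
  have hceil : n ≤ 3 * ⌈(n : ℝ) / 3⌉₊ := by
    have := Nat.le_ceil ((n : ℝ) / 3)
    exact_mod_cast (by linarith : (n : ℝ) ≤ 3 * ⌈(n : ℝ) / 3⌉₊)
  obtain ⟨S, hcard, hS⟩ := pathGraph_exists_dominating (by omega) hceil
  have hS' : S.card ∈ {k | ∃ S, IsAlphaDom (pathGraph n) α S ∧ S.card = k} :=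
    ⟨S, (hdom S).mpr hS, rfl⟩
  refine le_antisymm ((Nat.sInf_le hS').trans hcard) (le_csInf ⟨_, hS'⟩ ?_)
  rintro _ ⟨T, hT, rfl⟩
  have hT := card_le_mul_card_of_dominating pathGraph_degree_le_two ((hdom T).mp hT)
  rw [Fintype.card_fin] at hT
  exact Nat.ceil_le.mpr (by rw [div_le_iff₀ three_pos]; exact_mod_cast hT)

end

theorem stmt_16 (n : ℕ) (hn : 3 ≤ n) :
    betaPack (SimpleGraph.pathGraph n) (1/3 : ℝ) = 0 ∧
      alphaDomNum (SimpleGraph.pathGraph n) (1/3 : ℝ) = ⌈(n : ℝ) / 3⌉₊ ∧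
      betaPack (SimpleGraph.pathGraph n) (1/3 : ℝ) <
        alphaDomNum (SimpleGraph.pathGraph n) (1/3 : ℝ) := by
  have hpack := betaPack_pathGraph (n := n) (by omega) (β := 1 / 3) (by norm_num) (by norm_num)
  have hdom := alphaDomNum_pathGraph (n := n) (by omega) (α := 1 / 3) (by norm_num) (by norm_num)
  refine ⟨hpack, hdom, ?_⟩
  rw [hpack, hdom, Nat.ceil_pos]
  positivity
end
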